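/- arXiv:1805.11454 — 2 statements merged into one kernel-verified Lean document; each statement's English description precedes it below -/
import Mathlib

section
/- Let n ≥ 1, p ≥ 1, α > 0, and let W ∈ ℝ^{n×n} be a nonnegative doubly stochastic matrix such that the operator 2-norm ρ_w of W − (1/n)𝟙𝟙ᵀ satisfies ρ_w < 1. For any x, y ∈ ℝ^{n×p}, set x⁺ := W(x − αy), and for z ∈ ℝ^{n×p} write z̄ := (1/n)𝟙ᵀz. Then ‖x⁺ − 𝟙\overline{x⁺}‖_F² ≤ ((1 + ρ_w²)/2) ‖x − 𝟙x̄‖_F² + α² ((1 + ρ_w²)ρ_w²/(1 − ρ_w²)) ‖y − 𝟙ȳ‖_F². -/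
/-!
Writing `J = n⁻¹ 𝟙𝟙ᵀ`, double stochasticity gives `WJ = JW = J` and `J² = J`, so the consensus
error of `x⁺` factors as `(W - J)((x - Jx) - α(y - Jy))`. Hence its squared Frobenius norm is at
most `ρ_w²‖(x - Jx) - α(y - Jy)‖_F²`, which the weighted Young inequality
`K(s - t)² ≤ (K + a)s² + (K + b)t²` (valid when `a > 0` and `ab ≥ K²`) splits with `K = ρ_w²`,
`a = (1 - ρ_w²)/2` and `b = 2ρ_w⁴/(1 - ρ_w²)`.
-/

open Matrix

/-- Frobenius norm of a real matrix. -/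
noncomputable def frobNorm {n p : ℕ} (M : Matrix (Fin n) (Fin p) ℝ) : ℝ :=
  Real.sqrt (∑ i, ∑ j, (M i j) ^ 2)

/-- Operator 2-norm of a real matrix. -/
noncomputable def l2OpNorm {m n : ℕ} (M : Matrix (Fin m) (Fin n) ℝ) : ℝ :=
  ‖LinearMap.toContinuousLinearMap (Matrix.toEuclideanLin M)‖

/-- The matrix `𝟙 z̄` whose every row is the average of the rows of `z`. -/
noncomputable def onesAvg {n p : ℕ} (z : Matrix (Fin n) (Fin p) ℝ) : Matrix (Fin n) (Fin p) ℝ :=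
  Matrix.of fun _ j => (n : ℝ)⁻¹ * ∑ i, z i j

theorem Matrix.sub_mul_sub_mul_eq_of_idempotent {m p R : Type*} [Fintype m] [Ring R]
    {W P : Matrix m m R} (hWP : W * P = P) (hPW : P * W = P) (hPP : P * P = P)
    (z : Matrix m p R) :
    (W - P) * (z - P * z) = W * z - P * (W * z) := by
  simp only [Matrix.sub_mul, Matrix.mul_sub, ← Matrix.mul_assoc, hWP, hPW, hPP]
  abel

theorem mul_sq_sub_le {K a b : ℝ} (ha : 0 < a) (hab : K ^ 2 ≤ a * b) (s t : ℝ) :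
    K * (s - t) ^ 2 ≤ (K + a) * s ^ 2 + (K + b) * t ^ 2 := by
  have : 0 ≤ a * (a * s ^ 2 + b * t ^ 2 + 2 * K * s * t) := by
    nlinarith [sq_nonneg (a * s + K * t), mul_nonneg (sub_nonneg.2 hab) (sq_nonneg t)]
  nlinarith [nonneg_of_mul_nonneg_right this ha]

section Averaging

variable {n : ℕ}

noncomputable abbrev avgMatrix (n : ℕ) : Matrix (Fin n) (Fin n) ℝ :=
  (n : ℝ)⁻¹ • Matrix.of fun _ _ => 1

theorem avgMatrix_mul {p : ℕ} (z : Matrix (Fin n) (Fin p) ℝ) : avgMatrix n * z = onesAvg z := by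
  ext i j
  simp [onesAvg, Matrix.mul_apply, Finset.mul_sum]

theorem avgMatrix_mul_self : avgMatrix n * avgMatrix n = avgMatrix n := by
  rw [avgMatrix_mul]
  ext i j
  simpa [onesAvg, mul_assoc] using mul_inv_mul_cancel (n : ℝ)⁻¹

theorem mul_avgMatrix_of_mulVec_one {W : Matrix (Fin n) (Fin n) ℝ}
    (hW : W.mulVec (fun _ => (1 : ℝ)) = fun _ => (1 : ℝ)) : W * avgMatrix n = avgMatrix n := by
  ext i j
  have hi := congrFun hW i
  simp only [mulVec, dotProduct, mul_one] at hi
  simp [Matrix.mul_apply, ← Finset.sum_mul, hi]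

theorem avgMatrix_mul_of_vecMul_one {W : Matrix (Fin n) (Fin n) ℝ}
    (hW : Matrix.vecMul (fun _ => (1 : ℝ)) W = fun _ => (1 : ℝ)) :
    avgMatrix n * W = avgMatrix n := by
  ext i j
  have hj := congrFun hW j
  simp only [vecMul, dotProduct, one_mul] at hj
  simp [Matrix.mul_apply, ← Finset.mul_sum, hj]

theorem sub_smul_sub_onesAvg {p : ℕ} (α : ℝ) (x y : Matrix (Fin n) (Fin p) ℝ) :
    x - α • y - onesAvg (x - α • y) = x - onesAvg x - α • (y - onesAvg y) := by
  rw [← avgMatrix_mul, ← avgMatrix_mul, ← avgMatrix_mul, Matrix.mul_sub, Matrix.mul_smul,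
    smul_sub]
  abel

theorem mul_sub_onesAvg_mul_eq {p : ℕ} {W : Matrix (Fin n) (Fin n) ℝ}
    (hWrow : W.mulVec (fun _ => (1 : ℝ)) = fun _ => (1 : ℝ))
    (hWcol : Matrix.vecMul (fun _ => (1 : ℝ)) W = fun _ => (1 : ℝ))
    (z : Matrix (Fin n) (Fin p) ℝ) :
    W * z - onesAvg (W * z) = (W - avgMatrix n) * (z - onesAvg z) := by
  rw [← avgMatrix_mul, ← avgMatrix_mul,
    sub_mul_sub_mul_eq_of_idempotent (mul_avgMatrix_of_mulVec_one hWrow)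
      (avgMatrix_mul_of_vecMul_one hWcol) avgMatrix_mul_self]

end Averaging

section Frobenius

variable {m n p : ℕ}

theorem frobNorm_sq (M : Matrix (Fin n) (Fin p) ℝ) : frobNorm M ^ 2 = ∑ i, ∑ j, (M i j) ^ 2 :=
  Real.sq_sqrt (by positivity)

theorem sum_sq_mulVec_le (M : Matrix (Fin m) (Fin n) ℝ) (v : Fin n → ℝ) :
    ∑ i, (M *ᵥ v) i ^ 2 ≤ l2OpNorm M ^ 2 * ∑ i, v i ^ 2 := by
  have h := pow_le_pow_left₀ (norm_nonneg _) (M.l2_opNorm_mulVec (WithLp.toLp 2 v)) 2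
  rw [mul_pow, EuclideanSpace.real_norm_sq_eq, EuclideanSpace.real_norm_sq_eq] at h
  exact h

theorem frobNorm_mul_sq_le (M : Matrix (Fin m) (Fin n) ℝ) (B : Matrix (Fin n) (Fin p) ℝ) :
    frobNorm (M * B) ^ 2 ≤ l2OpNorm M ^ 2 * frobNorm B ^ 2 := by
  rw [frobNorm_sq, frobNorm_sq, Finset.sum_comm, Finset.sum_comm (f := fun i j => B i j ^ 2),
    Finset.mul_sum]
  exact Finset.sum_le_sum fun j _ => sum_sq_mulVec_le M (fun k => B k j)

theorem mul_frobNorm_sub_smul_sq_le {K a b : ℝ} (ha : 0 < a) (hab : K ^ 2 ≤ a * b)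
    (u v : Matrix (Fin n) (Fin p) ℝ) (α : ℝ) :
    K * frobNorm (u - α • v) ^ 2 ≤
      (K + a) * frobNorm u ^ 2 + (K + b) * (α ^ 2 * frobNorm v ^ 2) := by
  simp only [frobNorm_sq, Finset.mul_sum, ← Finset.sum_add_distrib]
  gcongr with i _ j _
  simpa [mul_pow, mul_left_comm] using mul_sq_sub_le ha hab (u i j) (α * v i j)

end Frobenius

theorem stmt5_general (n p : ℕ) (α : ℝ)
    (W : Matrix (Fin n) (Fin n) ℝ)
    (hWrow : W.mulVec (fun _ => (1 : ℝ)) = fun _ => (1 : ℝ))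
    (hWcol : Matrix.vecMul (fun _ => (1 : ℝ)) W = fun _ => (1 : ℝ))
    (hρ : l2OpNorm (W - (n : ℝ)⁻¹ • Matrix.of (fun _ _ : Fin n => (1 : ℝ))) < 1)
    (x y : Matrix (Fin n) (Fin p) ℝ) :
    frobNorm (W * (x - α • y) - onesAvg (W * (x - α • y))) ^ 2 ≤
      ((1 + l2OpNorm (W - (n : ℝ)⁻¹ • Matrix.of (fun _ _ : Fin n => (1 : ℝ))) ^ 2) / 2) *
          frobNorm (x - onesAvg x) ^ 2 +
        α ^ 2 *
          ((1 + l2OpNorm (W - (n : ℝ)⁻¹ • Matrix.of (fun _ _ : Fin n => (1 : ℝ))) ^ 2) *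
              l2OpNorm (W - (n : ℝ)⁻¹ • Matrix.of (fun _ _ : Fin n => (1 : ℝ))) ^ 2 /
            (1 - l2OpNorm (W - (n : ℝ)⁻¹ • Matrix.of (fun _ _ : Fin n => (1 : ℝ))) ^ 2)) *
          frobNorm (y - onesAvg y) ^ 2 := by
  set ρ := l2OpNorm (W - (n : ℝ)⁻¹ • Matrix.of (fun _ _ : Fin n => (1 : ℝ)))
  have hgap : 0 < 1 - ρ ^ 2 := by nlinarith [show 0 ≤ ρ from norm_nonneg _]
  rw [mul_sub_onesAvg_mul_eq hWrow hWcol, sub_smul_sub_onesAvg]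
  calc frobNorm ((W - avgMatrix n) * (x - onesAvg x - α • (y - onesAvg y))) ^ 2
      ≤ ρ ^ 2 * frobNorm (x - onesAvg x - α • (y - onesAvg y)) ^ 2 := frobNorm_mul_sq_le _ _
    _ ≤ (ρ ^ 2 + (1 - ρ ^ 2) / 2) * frobNorm (x - onesAvg x) ^ 2 +
          (ρ ^ 2 + 2 * ρ ^ 4 / (1 - ρ ^ 2)) * (α ^ 2 * frobNorm (y - onesAvg y) ^ 2) :=
        mul_frobNorm_sub_smul_sq_le (by positivity) (le_of_eq (by field_simp)) _ _ _
    _ = _ := by field_simp; ring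

theorem stmt5 (n p : ℕ) (hn : 1 ≤ n) (hp : 1 ≤ p) (α : ℝ) (hα : 0 < α)
    (W : Matrix (Fin n) (Fin n) ℝ)
    (hWnonneg : ∀ i j, 0 ≤ W i j)
    (hWrow : W.mulVec (fun _ => (1 : ℝ)) = fun _ => (1 : ℝ))
    (hWcol : Matrix.vecMul (fun _ => (1 : ℝ)) W = fun _ => (1 : ℝ))
    (hρ : l2OpNorm (W - (n : ℝ)⁻¹ • Matrix.of (fun _ _ : Fin n => (1 : ℝ))) < 1)
    (x y : Matrix (Fin n) (Fin p) ℝ) :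
    frobNorm (W * (x - α • y) - onesAvg (W * (x - α • y))) ^ 2 ≤
      ((1 + l2OpNorm (W - (n : ℝ)⁻¹ • Matrix.of (fun _ _ : Fin n => (1 : ℝ))) ^ 2) / 2) *
          frobNorm (x - onesAvg x) ^ 2 +
        α ^ 2 *
          ((1 + l2OpNorm (W - (n : ℝ)⁻¹ • Matrix.of (fun _ _ : Fin n => (1 : ℝ))) ^ 2) *
              l2OpNorm (W - (n : ℝ)⁻¹ • Matrix.of (fun _ _ : Fin n => (1 : ℝ))) ^ 2 /
            (1 - l2OpNorm (W - (n : ℝ)⁻¹ • Matrix.of (fun _ _ : Fin n => (1 : ℝ))) ^ 2)) *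
          frobNorm (y - onesAvg y) ^ 2 :=
  stmt5_general n p α W hWrow hWcol hρ x y
end

section
/- Let n ≥ 1, p ≥ 1, σ > 0, and let W ∈ ℝ^{n×n} be a nonnegative doubly stochastic matrix. Let g_1, …, g_n be independent random vectors in ℝ^p with finite second moments, with E[g_i] = m_i and E[‖g_i − m_i‖²] ≤ σ² for each i. Let G ∈ ℝ^{n×p} be the random matrix with rows g_i, M ∈ ℝ^{n×p} the matrix with rows m_i, and ḡ := (1/n)∑_{i=1}^n g_i. Then ∑_{i=1}^n E[⟨(WG)_i − ḡ, m_i − g_i⟩] ≤ σ², where (WG)_i = ∑_{j=1}^n w_{ij} g_j denotes the i-th row of WG. -/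
/-!
Write the `i`-th row as `∑ⱼ cⱼ gⱼ` with `cⱼ = W i j - 1/n`. By independence, the terms `j ≠ i`
have expectation `⟪E gⱼ, E (mᵢ - gᵢ)⟫ = 0`, while the term `j = i` contributes
`-cᵢ E‖gᵢ - mᵢ‖²`. So the sum equals `∑ᵢ (1/n - W i i) E‖gᵢ - mᵢ‖² ≤ ∑ᵢ σ² / n = σ²`,
as `W i i ≥ 0`.
-/

open MeasureTheory ProbabilityTheory Finset
open scoped RealInnerProductSpace

theorem MeasureTheory.MemLp.integrable_inner {α E : Type*} [MeasurableSpace α] {μ : Measure α}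
    [NormedAddCommGroup E] [InnerProductSpace ℝ E] {f g : α → E}
    (hf : MemLp f 2 μ) (hg : MemLp g 2 μ) : Integrable (fun x => ⟪f x, g x⟫) μ :=
  (L2.integrable_inner (𝕜 := ℝ) (hf.toLp f) (hg.toLp g)).congr <| by
    filter_upwards [hf.coeFn_toLp, hg.coeFn_toLp] with x hfx hgx
    rw [hfx, hgx]

section Centered

variable {Ω E : Type*} [MeasurableSpace Ω] {μ : Measure Ω} [IsProbabilityMeasure μ]
  [NormedAddCommGroup E] [InnerProductSpace ℝ E] [CompleteSpace E]

theorem integral_integral_sub_eq_zero {X : Ω → E} (hX : Integrable X μ) :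
    ∫ ω, (μ[X] - X ω) ∂μ = 0 := by
  rw [integral_sub (integrable_const _) hX, integral_const, probReal_univ, one_smul, sub_self]

theorem integral_inner_integral_sub_self {X : Ω → E} (hX : MemLp X 2 μ) :
    ∫ ω, ⟪X ω, μ[X] - X ω⟫ ∂μ = -∫ ω, ‖X ω - μ[X]‖ ^ 2 ∂μ := by
  have hX₁ : Integrable X μ := hX.integrable one_le_two
  have hsplit : ∀ ω, ⟪X ω, μ[X] - X ω⟫ = ⟪μ[X], μ[X] - X ω⟫ - ‖X ω - μ[X]‖ ^ 2 := fun ω => by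
    rw [norm_sub_sq_real]
    simp only [inner_sub_right, real_inner_self_eq_norm_sq, real_inner_comm]
    ring
  have hcent : Integrable (fun ω => μ[X] - X ω) μ := (integrable_const _).sub hX₁
  have hinner : Integrable (fun ω => ⟪μ[X], μ[X] - X ω⟫) μ := hcent.const_inner _
  have hsq : Integrable (fun ω => ‖X ω - μ[X]‖ ^ 2) μ :=
    (hX.sub (memLp_const _)).integrable_norm_pow two_ne_zero
  simp_rw [hsplit]
  rw [integral_sub hinner hsq, integral_inner hcent,
    integral_integral_sub_eq_zero hX₁, inner_zero_right, zero_sub]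

theorem integral_inner_integral_sub_of_indepFun [MeasurableSpace E] [BorelSpace E]
    {X Y : Ω → E} (hXY : IndepFun X Y μ) (hX : Integrable X μ) (hY : Integrable Y μ) :
    ∫ ω, ⟪X ω, μ[Y] - Y ω⟫ ∂μ = 0 := by
  have hcentered : IndepFun X (fun ω => μ[Y] - Y ω) μ :=
    hXY.comp measurable_id (continuous_const.sub continuous_id).measurable
  calc ∫ ω, ⟪X ω, μ[Y] - Y ω⟫ ∂μ = ⟪μ[X], ∫ ω, (μ[Y] - Y ω) ∂μ⟫ :=
        hcentered.integral_bilin hX ((integrable_const _).sub hY) (innerSL ℝ)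
    _ = 0 := by rw [integral_integral_sub_eq_zero hY, inner_zero_right]

theorem integral_inner_sum_smul_integral_sub [MeasurableSpace E] [BorelSpace E]
    {ι : Type*} [Fintype ι] {g : ι → Ω → E}
    (hindep : Pairwise fun j k => IndepFun (g j) (g k) μ) (hL2 : ∀ j, MemLp (g j) 2 μ)
    (c : ι → ℝ) (i : ι) :
    ∫ ω, ⟪∑ j, c j • g j ω, μ[g i] - g i ω⟫ ∂μ = -(c i * ∫ ω, ‖g i ω - μ[g i]‖ ^ 2 ∂μ) := by
  have hint : ∀ j, Integrable (fun ω => ⟪g j ω, μ[g i] - g i ω⟫) μ := fun j =>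
    (hL2 j).integrable_inner ((memLp_const _).sub (hL2 i))
  simp_rw [sum_inner, real_inner_smul_left]
  rw [integral_finsetSum _ fun j _ => (hint j).const_mul (c j)]
  simp only [integral_const_mul]
  rw [sum_eq_single_of_mem i (mem_univ i) fun j _ hji => by
      rw [integral_inner_integral_sub_of_indepFun (hindep hji) ((hL2 j).integrable one_le_two)
        ((hL2 i).integrable one_le_two), mul_zero],
    integral_inner_integral_sub_self (hL2 i), mul_neg]

end Centered

theorem stmt18_general (n p : ℕ) (σ : ℝ)
    (W : Matrix (Fin n) (Fin n) ℝ)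
    (hWnonneg : ∀ i j, 0 ≤ W i j)
    {Ω : Type*} [MeasurableSpace Ω] (P : Measure Ω) [IsProbabilityMeasure P]
    (g : Fin n → Ω → EuclideanSpace ℝ (Fin p))
    (hindep : iIndepFun g P)
    (hL2 : ∀ i, MemLp (g i) 2 P)
    (m : Fin n → EuclideanSpace ℝ (Fin p))
    (hmean : ∀ i, ∫ ω, g i ω ∂P = m i)
    (hvar : ∀ i, ∫ ω, ‖g i ω - m i‖ ^ 2 ∂P ≤ σ ^ 2) :
    (∑ i, ∫ ω, ⟪(∑ j, W i j • g j ω) - (n : ℝ)⁻¹ • ∑ j, g j ω, m i - g i ω⟫ ∂P) ≤ σ ^ 2 := by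
  obtain rfl : m = fun i => P[g i] := funext fun i => (hmean i).symm
  have hrow : ∀ i, ∫ ω, ⟪(∑ j, W i j • g j ω) - (n : ℝ)⁻¹ • ∑ j, g j ω, P[g i] - g i ω⟫ ∂P
      = ((n : ℝ)⁻¹ - W i i) * ∫ ω, ‖g i ω - P[g i]‖ ^ 2 ∂P := fun i => by
    simp_rw [smul_sum, ← sum_sub_distrib, ← sub_smul]
    rw [integral_inner_sum_smul_integral_sub (fun _ _ hjk => hindep.indepFun hjk) hL2]
    ring
  calc (∑ i, ∫ ω, ⟪(∑ j, W i j • g j ω) - (n : ℝ)⁻¹ • ∑ j, g j ω, P[g i] - g i ω⟫ ∂P)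
      = ∑ i, ((n : ℝ)⁻¹ - W i i) * ∫ ω, ‖g i ω - P[g i]‖ ^ 2 ∂P := sum_congr rfl fun i _ => hrow i
    _ ≤ ∑ _i : Fin n, (n : ℝ)⁻¹ * σ ^ 2 := sum_le_sum fun i _ =>
        mul_le_mul (by linarith [hWnonneg i i]) (hvar i)
          (integral_nonneg fun _ => by positivity) (by positivity)
    _ = n * (n : ℝ)⁻¹ * σ ^ 2 := by simp [mul_assoc]
    _ ≤ σ ^ 2 := mul_le_of_le_one_left (sq_nonneg σ) mul_inv_le_one

theorem stmt18 (n p : ℕ) (hn : 1 ≤ n) (hp : 1 ≤ p) (σ : ℝ) (hσ : 0 < σ)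
    (W : Matrix (Fin n) (Fin n) ℝ)
    (hWnonneg : ∀ i j, 0 ≤ W i j)
    (hWrow : W.mulVec (fun _ => (1 : ℝ)) = fun _ => (1 : ℝ))
    (hWcol : Matrix.vecMul (fun _ => (1 : ℝ)) W = fun _ => (1 : ℝ))
    {Ω : Type*} [MeasurableSpace Ω] (P : Measure Ω) [IsProbabilityMeasure P]
    (g : Fin n → Ω → EuclideanSpace ℝ (Fin p))
    (hindep : iIndepFun g P)
    (hL2 : ∀ i, MemLp (g i) 2 P)
    (m : Fin n → EuclideanSpace ℝ (Fin p))
    (hmean : ∀ i, ∫ ω, g i ω ∂P = m i)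
    (hvar : ∀ i, ∫ ω, ‖g i ω - m i‖ ^ 2 ∂P ≤ σ ^ 2) :
    (∑ i, ∫ ω, ⟪(∑ j, W i j • g j ω) - (n : ℝ)⁻¹ • ∑ j, g j ω, m i - g i ω⟫ ∂P) ≤ σ ^ 2 :=
  stmt18_general n p σ W hWnonneg P g hindep hL2 m hmean hvar
end
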